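/- Boundary derivative mismatch for the linear system. Let d ≥ 2/λ₂ and α, β ∈ ℝ². Then for j = 1, 2: (q̇_{d,L}(0) − q̇⁺_{h,L}(0))_j = λ_j(α_j − β_j e^{−λ_j d})/sinh(λ_j d) and (q̇_{d,L}(d) − q̇⁻_{h,L}(d))_j = λ_j(−β_j + α_j e^{−λ_j d})/sinh(λ_j d); consequently Δ_L^d(β, α) := max(|q̇_{d,L}(0) − q̇⁺_{h,L}(0)|, |q̇_{d,L}(d) − q̇⁻_{h,L}(d)|) ≤ 2√2 · ((1 + e^{−2})/(1 − e^{−4})) · max_{j=1,2} { λ_j S_j e^{−λ_j d} }, where S_j = max(|α_j|, |β_j|). -/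

import Mathlib

/-! Each component of `q_{d,L}` is a combination of `sinh`, so its boundary slopes are explicit,
and `cosh x - sinh x = e^{-x}` turns the mismatches into the stated formulas. For the bound,
`(1 + e^{-x}) / sinh x = 2e^{-x} / (1 - e^{-x}) ≤ 2e^{-x} (1 + e^{-2}) / (1 - e^{-4})` when
`x = λ_j d ≥ 2`, and the factor `√2` passes from the larger coordinate to the Euclidean norm. -/

noncomputable section

open Real Filter Set Topology MeasureTheory RealInnerProductSpace

/-- The plane ℝ² with the Euclidean norm. -/
abbrev E2 : Type := EuclideanSpace ℝ (Fin 2)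

/-- The point of `E2` with coordinates `a`, `b`. -/
def pt (a b : ℝ) : E2 := WithLp.toLp 2 ![a, b]

/-- The rotation `𝒥 (v₁, v₂) = (-v₂, v₁)`. -/
def Jrot (v : E2) : E2 := pt (-(v 1)) (v 0)

/-- The matrix `A = diag (λ₁², λ₂²)` acting on `E2`. -/
def Amul (l1 l2 : ℝ) (v : E2) : E2 := pt (l1 ^ 2 * v 0) (l2 ^ 2 * v 1)

/-- The equation (*) : `-q̈ + ψ(q) 𝒥 q̇ + A q = ∇W (q)` holds at time `t`. -/
def EqnAt (l1 l2 : ℝ) (ψ : E2 → ℝ) (W : E2 → ℝ) (q : ℝ → E2) (t : ℝ) : Prop :=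
  -(deriv (deriv q) t) + ψ (q t) • Jrot (deriv q t) + Amul l1 l2 (q t) = gradient W (q t)

/-- `q` is a (global) solution of (*). -/
def IsSolution (l1 l2 : ℝ) (ψ : E2 → ℝ) (W : E2 → ℝ) (q : ℝ → E2) : Prop :=
  ContDiff ℝ 2 q ∧ ∀ t, EqnAt l1 l2 ψ W q t

/-- `q` solves (*) on the set `s`. -/
def IsSolutionOn (l1 l2 : ℝ) (ψ : E2 → ℝ) (W : E2 → ℝ) (q : ℝ → E2) (s : Set ℝ) : Prop :=
  (∀ t ∈ s, DifferentiableAt ℝ q t) ∧ (∀ t ∈ s, DifferentiableAt ℝ (deriv q) t) ∧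
    ∀ t ∈ s, EqnAt l1 l2 ψ W q t

/-- A homoclinic (to `0`) solution of (*). -/
def IsHomoclinic (l1 l2 : ℝ) (ψ : E2 → ℝ) (W : E2 → ℝ) (q : ℝ → E2) : Prop :=
  IsSolution l1 l2 ψ W q ∧ Tendsto q (cocompact ℝ) (𝓝 0) ∧
    Tendsto (deriv q) (cocompact ℝ) (𝓝 0)

/-- Condition (W1). -/
def W1cond (W : E2 → ℝ) (ρ0 ρ1 L1 L1' : ℝ) : Prop :=
  ContDiff ℝ 2 W ∧ W 0 = 0 ∧ gradient W 0 = 0 ∧ fderiv ℝ (gradient W) 0 = 0 ∧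
    0 < ρ0 ∧ ρ0 < ρ1 ∧
    LipschitzOnWith (Real.toNNReal L1) (fderiv ℝ (gradient W)) (Metric.closedBall 0 ρ0) ∧
    LipschitzOnWith (Real.toNNReal L1') (fderiv ℝ (gradient W)) (Metric.closedBall 0 ρ1)

/-- Condition (P1). -/
def P1cond (ψ : E2 → ℝ) (ρ0 ρ1 L2 L2' L3' : ℝ) : Prop :=
  ContDiff ℝ 1 ψ ∧ ψ 0 = 0 ∧
    LipschitzOnWith (Real.toNNReal L2) ψ (Metric.closedBall 0 ρ0) ∧
    LipschitzOnWith (Real.toNNReal L2') ψ (Metric.closedBall 0 ρ1) ∧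
    LipschitzOnWith (Real.toNNReal L3') (gradient ψ) (Metric.closedBall 0 ρ1)

/-- Condition (v1) : `ψ = ∂_{q₁} v₂ - ∂_{q₂} v₁`. -/
def V1cond (ψ : E2 → ℝ) (v : E2 → E2) : Prop :=
  ContDiff ℝ 1 v ∧ v 0 = 0 ∧ fderiv ℝ v 0 = 0 ∧
    ∀ q : E2, ψ q = fderiv ℝ (fun x => v x 1) q (pt 1 0) - fderiv ℝ (fun x => v x 0) q (pt 0 1)

/-- The constant Λ. -/
def Lam (l1 l2 L1 L2 : ℝ) : ℝ := L1 / l2 ^ 2 + 3 * L2 * l1 / l2 ^ 2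

def supNorm (y : ℝ → E2) : ℝ := ⨆ t : ℝ, ‖y t‖

/-- The norm of `Y = W^{1,∞}` : `‖y‖ = max (|y|_∞, |ẏ|_∞ / λ₂)`. -/
def Ynorm (l2 : ℝ) (y : ℝ → E2) : ℝ := max (supNorm y) (supNorm (deriv y) / l2)

/-- Membership in `Y = W^{1,∞}(ℝ, ℝ²)`. -/
def MemY (y : ℝ → E2) : Prop :=
  Differentiable ℝ y ∧ BddAbove (range fun t => ‖y t‖) ∧ BddAbove (range fun t => ‖deriv y t‖)

/-- The constant Λ̄. -/
def LamBar (l1 l2 L1' L2' L3' : ℝ) (qb qt : ℝ → E2) : ℝ :=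
  L1' / l2 ^ 2 + 3 * L2' * l1 / l2 ^ 2 +
    max (supNorm (deriv qb)) (supNorm (deriv qt)) * L3' / l2 ^ 2

/-- The operator `L_A`, given by the explicit kernel formula. -/
def LA (l1 l2 : ℝ) (h : ℝ → E2) : ℝ → E2 := fun t =>
  pt ((1 / (2 * l1)) * ∫ s : ℝ, Real.exp (-(l1 * |t - s|)) * h s 0)
     ((1 / (2 * l2)) * ∫ s : ℝ, Real.exp (-(l2 * |t - s|)) * h s 1)

/-- The operator `S(y) = y - L_A (∇W(y) - ψ(y) 𝒥 ẏ)`. -/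
def Sop (l1 l2 : ℝ) (ψ : E2 → ℝ) (W : E2 → ℝ) (y : ℝ → E2) : ℝ → E2 := fun t =>
  y t - LA l1 l2 (fun s => gradient W (y s) - ψ (y s) • Jrot (deriv y s)) t

/-- The linearization `dS(q) h`. -/
def dSop (l1 l2 : ℝ) (ψ : E2 → ℝ) (W : E2 → ℝ) (q h : ℝ → E2) : ℝ → E2 := fun t =>
  h t - LA l1 l2 (fun s =>
      fderiv ℝ (gradient W) (q s) (h s) - ψ (q s) • Jrot (deriv h s)
        - ⟪gradient ψ (q s), h s⟫ • Jrot (deriv q s)) t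

/-- The inner product of `E = W^{1,2}`. -/
def Eip (l1 l2 : ℝ) (x y : ℝ → E2) : ℝ :=
  ∫ t : ℝ, (deriv x t 0 * deriv y t 0 + l1 ^ 2 * x t 0 * y t 0 +
            deriv x t 1 * deriv y t 1 + l2 ^ 2 * x t 1 * y t 1)

/-- Nondegeneracy of a homoclinic `q` : every solution of the linearized equation decaying
at both ends is a multiple of `q̇`. -/
def Nondeg (l1 l2 : ℝ) (ψ : E2 → ℝ) (W : E2 → ℝ) (q : ℝ → E2) : Prop :=
  ∀ h : ℝ → E2, ContDiff ℝ 2 h →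
    (∀ t, -(deriv (deriv h) t) + Amul l1 l2 (h t) + ψ (q t) • Jrot (deriv h t)
        + ⟪gradient ψ (q t), h t⟫ • Jrot (deriv q t)
        - fderiv ℝ (gradient W) (q t) (h t) = 0) →
    Tendsto h (cocompact ℝ) (𝓝 0) → Tendsto (deriv h) (cocompact ℝ) (𝓝 0) →
    ∃ c : ℝ, ∀ t, h t = c • deriv q t

/-- `T` is the crossing time of `q` at radius `r`. -/
def CrossAt (q : ℝ → E2) (r T : ℝ) : Prop :=
  0 < T ∧ ‖q T‖ = r ∧ ‖q (-T)‖ = r ∧ ∀ t : ℝ, T < |t| → ‖q t‖ < r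

/-- The element `ā₀ = L_A (q̇ χ_{(t̄ - τ̄, t̄ + τ̄)})`. -/
def a0fun (l1 l2 : ℝ) (q : ℝ → E2) (tm τ : ℝ) : ℝ → E2 :=
  LA l1 l2 (Set.indicator (Set.Ioo (tm - τ) (tm + τ)) (deriv q))

/-- The nondegeneracy constant condition :
`max (‖dS(q)h - μ a₀‖, R |(h, a₀)|) ≥ C₁ ‖h‖` for all `h ∈ Y`, `μ ∈ ℝ`. -/
def NondegConst (l1 l2 : ℝ) (ψ : E2 → ℝ) (W : E2 → ℝ) (q a0 : ℝ → E2) (R C1 : ℝ) : Prop :=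
  ∀ h : ℝ → E2, MemY h → ∀ μ : ℝ,
    C1 * Ynorm l2 h ≤
      max (Ynorm l2 (fun t => dSop l1 l2 ψ W q h t - μ • a0 t)) (R * |Eip l1 l2 h a0|)

/-- The strengthened nondegeneracy condition (2.5) :
`max (‖dS(q)h - μ ā‖, R |(h, ā)|) ≥ C₁ max (‖h‖, |μ|)`. -/
def NondegConst2 (l1 l2 : ℝ) (ψ : E2 → ℝ) (W : E2 → ℝ) (q abar : ℝ → E2) (R C1 : ℝ) : Prop :=
  ∀ h : ℝ → E2, MemY h → ∀ μ : ℝ,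
    C1 * max (Ynorm l2 h) |μ| ≤
      max (Ynorm l2 (fun t => dSop l1 l2 ψ W q h t - μ • abar t)) (R * |Eip l1 l2 h abar|)

/-- `T` is the time `T_{C₁}` associated with the homoclinic `q`. -/
def TC1spec (l2 Λ ρ0 C1 : ℝ) (q : ℝ → E2) (T : ℝ) : Prop :=
  IsLeast {T' : ℝ | 0 < T' ∧ ∀ t : ℝ, T' < |t| →
    ‖q t‖ ≤ ρ0 ∧ 8 * Λ * max ‖q t‖ (‖deriv q t‖ / l2) ≤ C1} T

/-- The function `l(ν) = max_{s ∈ (0,1/8)} [(1-s)²(1-s/5)/(1+s)³] s^{ν-1}`. -/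
def lfun (ν : ℝ) : ℝ :=
  ⨆ s ∈ Set.Ioo (0 : ℝ) (1 / 8 : ℝ), ((1 - s) ^ 2 * (1 - s / 5) / (1 + s) ^ 3) * s ^ (ν - 1)

/-- `ℳ = r min {|cos ω̄_u|, |cos ω̄_s|, |cos ω̃_u|, |cos ω̃_s|, |sin ...|}` -/
def Mcal (r wbu wbs wtu wts : ℝ) : ℝ :=
  r * min (min (min |Real.cos wbu| |Real.cos wbs|) (min |Real.cos wtu| |Real.cos wts|))
          (min (min |Real.sin wbu| |Real.sin wbs|) (min |Real.sin wtu| |Real.sin wts|))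



/-- The action functional `f`. -/
def factional (l1 l2 : ℝ) (v : E2 → E2) (W : E2 → ℝ) (q : ℝ → E2) : ℝ :=
  ∫ t : ℝ, (1 / 2 * ‖deriv q t‖ ^ 2 + 1 / 2 * (l1 ^ 2 * (q t 0) ^ 2 + l2 ^ 2 * (q t 1) ^ 2)
    - ⟪deriv q t, v (q t)⟫ - W (q t))

/-- The action of a path on the interval `[0, d]`. -/
def actionI (l1 l2 : ℝ) (v : E2 → E2) (W : E2 → ℝ) (q : ℝ → E2) (d : ℝ) : ℝ :=
  ∫ t in (0 : ℝ)..d, (1 / 2 * ‖deriv q t‖ ^ 2 + 1 / 2 * (l1 ^ 2 * (q t 0) ^ 2 + l2 ^ 2 * (q t 1) ^ 2)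
    - ⟪deriv q t, v (q t)⟫ - W (q t))

/-- The energy `ℰ(q, q̇) = ½|q̇|² - ½ A q · q + W(q)` of `q` at time `t`. -/
def energyAt (l1 l2 : ℝ) (W : E2 → ℝ) (q : ℝ → E2) (t : ℝ) : ℝ :=
  1 / 2 * ‖deriv q t‖ ^ 2 - 1 / 2 * (l1 ^ 2 * (q t 0) ^ 2 + l2 ^ 2 * (q t 1) ^ 2) + W (q t)

/-- A trajectory of (*) connecting `β` to `α` in time `d`, staying in the ball of radius `ρ`. -/
def IsConnecting (l1 l2 : ℝ) (ψ W : E2 → ℝ) (β α : E2) (ρ d : ℝ) (q : ℝ → E2) : Prop :=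
  IsSolutionOn l1 l2 ψ W q (Icc 0 d) ∧ q 0 = β ∧ q d = α ∧ ∀ t ∈ Icc (0 : ℝ) d, ‖q t‖ ≤ ρ

/-- The solution `q_{d,L}` of the linear system `-q̈ + Aq = 0` with `q(0) = β`, `q(d) = α`. -/
def qdLin (l1 l2 d : ℝ) (β α : E2) : ℝ → E2 := fun t =>
  pt ((β 0 * Real.sinh (l1 * (d - t)) + α 0 * Real.sinh (l1 * t)) / Real.sinh (l1 * d))
     ((β 1 * Real.sinh (l2 * (d - t)) + α 1 * Real.sinh (l2 * t)) / Real.sinh (l2 * d))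

/-- The solution `q⁺_{h,L}(t) = e^{-t√A} β` of the linear system. -/
def qpLin (l1 l2 : ℝ) (β : E2) : ℝ → E2 := fun t =>
  pt (Real.exp (-(l1 * t)) * β 0) (Real.exp (-(l2 * t)) * β 1)

/-- The solution `q⁻_{h,L}(t) = e^{(t-d)√A} α` of the linear system. -/
def qmLin (l1 l2 d : ℝ) (α : E2) : ℝ → E2 := fun t =>
  pt (Real.exp (l1 * (t - d)) * α 0) (Real.exp (l2 * (t - d)) * α 1)

/-- Select `Tb` or `Tt` according to `j_i = 0` or `j_i = 1`. -/
def Tsel (Tb Tt : ℝ) {k : ℕ} (jseq : Fin k → Bool) (i : Fin k) : ℝ := if jseq i then Tt else Tb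

/-- Select the homoclinic `q̄` or `q̃` according to `j_i = 0` or `j_i = 1`. -/
def Qsel (qb qt : ℝ → E2) {k : ℕ} (jseq : Fin k → Bool) (i : Fin k) : ℝ → E2 :=
  if jseq i then qt else qb

/-- `u_i = θ_i - T_i`. -/
def uTime (Tb Tt : ℝ) {k : ℕ} (jseq : Fin k → Bool) (θ : Fin k → ℝ) (i : Fin k) : ℝ :=
  θ i - Tsel Tb Tt jseq i

/-- `s_i = θ_i + T_i`. -/
def sTime (Tb Tt : ℝ) {k : ℕ} (jseq : Fin k → Bool) (θ : Fin k → ℝ) (i : Fin k) : ℝ :=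
  θ i + Tsel Tb Tt jseq i

/-- The translated elements `a_i = ā(· - θ_i)` resp. `ã(· - θ_i)`. -/
def aTrans (abar atil : ℝ → E2) {k : ℕ} (jseq : Fin k → Bool) (θ : Fin k → ℝ) (i : Fin k) :
    ℝ → E2 := fun t => (if jseq i then atil else abar) (t - θ i)

/-- `Q` is the glued curve `Q_Θ` : it coincides with the translated homoclinics on the
bump intervals `[u_i, s_i]` (and on the unbounded head and tail intervals), is continuous
and on each gap `[s_i, u_{i+1}]` is a trajectory of (*) with values in `B(0, 2r)`. -/
def IsGluedCurve (l1 l2 : ℝ) (ψ W : E2 → ℝ) (qb qt : ℝ → E2) (Tb Tt r : ℝ)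
    {k : ℕ} (hk : 0 < k) (jseq : Fin k → Bool) (θ : Fin k → ℝ) (Q : ℝ → E2) : Prop :=
  Continuous Q ∧
  (∀ t ≤ sTime Tb Tt jseq θ ⟨0, hk⟩, Q t = Qsel qb qt jseq ⟨0, hk⟩ (t - θ ⟨0, hk⟩)) ∧
  (∀ t, uTime Tb Tt jseq θ ⟨k - 1, Nat.sub_lt hk Nat.one_pos⟩ ≤ t →
    Q t = Qsel qb qt jseq ⟨k - 1, Nat.sub_lt hk Nat.one_pos⟩
      (t - θ ⟨k - 1, Nat.sub_lt hk Nat.one_pos⟩)) ∧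
  (∀ i : Fin k, ∀ t ∈ Icc (uTime Tb Tt jseq θ i) (sTime Tb Tt jseq θ i),
    Q t = Qsel qb qt jseq i (t - θ i)) ∧
  (∀ i : Fin k, ∀ hi : (i : ℕ) + 1 < k,
    IsSolutionOn l1 l2 ψ W Q (Ioo (sTime Tb Tt jseq θ i) (uTime Tb Tt jseq θ ⟨i + 1, hi⟩)) ∧
    ∀ t ∈ Icc (sTime Tb Tt jseq θ i) (uTime Tb Tt jseq θ ⟨i + 1, hi⟩), ‖Q t‖ ≤ 2 * r)

/-- Minimum of the absolute values of the coordinates of four points of the plane. -/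
def minCoord (p1 p2 p3 p4 : E2) : ℝ :=
  min (min (min |p1 0| |p1 1|) (min |p2 0| |p2 1|))
      (min (min |p3 0| |p3 1|) (min |p4 0| |p4 1|))

/-- The norm of the phase point `(q(t), q̇(t)) ∈ ℝ⁴`. -/
def phaseNorm (q : ℝ → E2) (t : ℝ) : ℝ := Real.sqrt (‖q t‖ ^ 2 + ‖deriv q t‖ ^ 2)

@[simp] lemma pt_apply_zero (a b : ℝ) : pt a b 0 = a := rfl

@[simp] lemma pt_apply_one (a b : ℝ) : pt a b 1 = b := rfl

lemma pt_sub (a b c d : ℝ) : pt a b - pt c d = pt (a - c) (b - d) := by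
  ext i; fin_cases i <;> simp [pt]

lemma norm_pt_le {a b c : ℝ} (ha : |a| ≤ c) (hb : |b| ≤ c) : ‖pt a b‖ ≤ √2 * c := by
  have hc : 0 ≤ c := (abs_nonneg a).trans ha
  have hnorm : ‖pt a b‖ = √(a ^ 2 + b ^ 2) := by
    simp [EuclideanSpace.norm_eq, Fin.sum_univ_two, pt]
  rw [hnorm, ← Real.sqrt_sq hc, ← Real.sqrt_mul zero_le_two]
  apply Real.sqrt_le_sqrt
  nlinarith [sq_le_sq' (abs_le.1 ha).1 (abs_le.1 ha).2, sq_le_sq' (abs_le.1 hb).1 (abs_le.1 hb).2]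

lemma hasDerivAt_pt {f g : ℝ → ℝ} {f' g' t : ℝ} (hf : HasDerivAt f f' t)
    (hg : HasDerivAt g g' t) : HasDerivAt (fun s => pt (f s) (g s)) (pt f' g') t := by
  have h : HasDerivAt (fun s => (![f s, g s] : Fin 2 → ℝ)) ![f', g'] t := by
    rw [hasDerivAt_pi]
    intro i
    fin_cases i
    · simpa using hf
    · simpa using hg
  exact (EuclideanSpace.equiv (Fin 2) ℝ).symm.hasFDerivAt.comp_hasDerivAt t h

lemma hasDerivAt_sinh_interpolant (l d b a t : ℝ) :
    HasDerivAt (fun s => (b * sinh (l * (d - s)) + a * sinh (l * s)) / sinh (l * d))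
      (l * (a * cosh (l * t) - b * cosh (l * (d - t))) / sinh (l * d)) t := by
  have hleft : HasDerivAt (fun s => l * (d - s)) (-l) t := by
    simpa using ((hasDerivAt_const t d).sub (hasDerivAt_id t)).const_mul l
  have hright : HasDerivAt (fun s => l * s) l t := by
    simpa using (hasDerivAt_id t).const_mul l
  exact (((hleft.sinh.const_mul b).add (hright.sinh.const_mul a)).div_const _).congr_deriv
    (by ring)

lemma hasDerivAt_qdLin (l1 l2 d : ℝ) (β α : E2) (t : ℝ) :
    HasDerivAt (qdLin l1 l2 d β α)
      (pt (l1 * (α 0 * cosh (l1 * t) - β 0 * cosh (l1 * (d - t))) / sinh (l1 * d))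
        (l2 * (α 1 * cosh (l2 * t) - β 1 * cosh (l2 * (d - t))) / sinh (l2 * d))) t :=
  hasDerivAt_pt (hasDerivAt_sinh_interpolant l1 d (β 0) (α 0) t)
    (hasDerivAt_sinh_interpolant l2 d (β 1) (α 1) t)

lemma hasDerivAt_exp_mul_sub_mul (l c t₀ t : ℝ) :
    HasDerivAt (fun s => exp (l * (s - t₀)) * c) (l * exp (l * (t - t₀)) * c) t := by
  have h : HasDerivAt (fun s => l * (s - t₀)) l t := by
    simpa using ((hasDerivAt_id t).sub_const t₀).const_mul l
  simpa [mul_comm l] using h.exp.mul_const c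

lemma hasDerivAt_qpLin (l1 l2 : ℝ) (β : E2) (t : ℝ) :
    HasDerivAt (qpLin l1 l2 β)
      (pt (-l1 * exp (-(l1 * t)) * β 0) (-l2 * exp (-(l2 * t)) * β 1)) t := by
  have h : ∀ l c, HasDerivAt (fun s => exp (-(l * s)) * c) (-l * exp (-(l * t)) * c) t := by
    intro l c
    simpa using hasDerivAt_exp_mul_sub_mul (-l) c 0 t
  exact hasDerivAt_pt (h l1 (β 0)) (h l2 (β 1))

lemma hasDerivAt_qmLin (l1 l2 d : ℝ) (α : E2) (t : ℝ) :
    HasDerivAt (qmLin l1 l2 d α)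
      (pt (l1 * exp (l1 * (t - d)) * α 0) (l2 * exp (l2 * (t - d)) * α 1)) t :=
  hasDerivAt_pt (hasDerivAt_exp_mul_sub_mul l1 (α 0) d t) (hasDerivAt_exp_mul_sub_mul l2 (α 1) d t)

lemma deriv_qdLin_sub_deriv_qpLin_zero {l1 l2 d : ℝ} (h1 : l1 * d ≠ 0) (h2 : l2 * d ≠ 0)
    (β α : E2) :
    deriv (qdLin l1 l2 d β α) 0 - deriv (qpLin l1 l2 β) 0 =
      pt (l1 * (α 0 - β 0 * exp (-(l1 * d))) / sinh (l1 * d))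
        (l2 * (α 1 - β 1 * exp (-(l2 * d))) / sinh (l2 * d)) := by
  rw [(hasDerivAt_qdLin l1 l2 d β α 0).deriv, (hasDerivAt_qpLin l1 l2 β 0).deriv, pt_sub]
  have := sinh_ne_zero.2 h1
  have := sinh_ne_zero.2 h2
  congr 1 <;>
  · simp only [mul_zero, sub_zero, neg_zero, cosh_zero, exp_zero]
    rw [← cosh_sub_sinh]
    field_simp
    ring

lemma deriv_qdLin_sub_deriv_qmLin_self {l1 l2 d : ℝ} (h1 : l1 * d ≠ 0) (h2 : l2 * d ≠ 0)
    (β α : E2) :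
    deriv (qdLin l1 l2 d β α) d - deriv (qmLin l1 l2 d α) d =
      pt (l1 * (-β 0 + α 0 * exp (-(l1 * d))) / sinh (l1 * d))
        (l2 * (-β 1 + α 1 * exp (-(l2 * d))) / sinh (l2 * d)) := by
  rw [(hasDerivAt_qdLin l1 l2 d β α d).deriv, (hasDerivAt_qmLin l1 l2 d α d).deriv, pt_sub]
  have := sinh_ne_zero.2 h1
  have := sinh_ne_zero.2 h2
  congr 1 <;>
  · simp only [sub_self, mul_zero, cosh_zero, exp_zero]
    rw [← cosh_sub_sinh]
    field_simp
    ring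

lemma abs_sub_mul_le_max_mul {a b e : ℝ} (he : 0 ≤ e) :
    |a - b * e| ≤ max |a| |b| * (1 + e) := by
  calc |a - b * e| ≤ |a| + |b| * e := by simpa [abs_mul, abs_of_nonneg he] using abs_sub a (b * e)
    _ ≤ max |a| |b| + max |a| |b| * e := by gcongr <;> simp
    _ = max |a| |b| * (1 + e) := by ring

lemma one_add_exp_neg_div_sinh {x : ℝ} (hx : x ≠ 0) :
    (1 + exp (-x)) / sinh x = 2 * exp (-x) / (1 - exp (-x)) := by
  have hsub : 1 - exp (-x) ≠ 0 := by
    rw [sub_ne_zero, ne_comm, Ne, exp_eq_one_iff, neg_eq_zero]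
    exact hx
  rw [div_eq_div_iff (sinh_ne_zero.2 hx) hsub, sinh_eq]
  have : exp (-x) * exp x = 1 := by rw [← exp_add, neg_add_cancel, exp_zero]
  linear_combination -this

lemma one_add_exp_neg_div_sinh_le {x : ℝ} (hx : 2 ≤ x) :
    (1 + exp (-x)) / sinh x ≤ 2 * ((1 + exp (-2)) / (1 - exp (-4))) * exp (-x) := by
  have he2 : exp (-2) < 1 := exp_lt_one_iff.2 (by norm_num)
  have hconst : (1 + exp (-2)) / (1 - exp (-4)) = 1 / (1 - exp (-2)) := by
    have h4 : exp (-4) = exp (-2) * exp (-2) := by rw [← exp_add]; norm_num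
    rw [div_eq_div_iff (by nlinarith [exp_pos (-2)]) (by linarith), h4]
    ring
  have hex : exp (-x) ≤ exp (-2) := exp_le_exp.2 (by linarith)
  rw [one_add_exp_neg_div_sinh (by linarith), hconst]
  calc 2 * exp (-x) / (1 - exp (-x)) ≤ 2 * exp (-x) / (1 - exp (-2)) := by
        gcongr
    _ = 2 * (1 / (1 - exp (-2))) * exp (-x) := by ring

lemma abs_neg_add_mul_le_max_mul {a b e : ℝ} (he : 0 ≤ e) :
    |-b + a * e| ≤ max |a| |b| * (1 + e) := by
  rw [neg_add_eq_sub, abs_sub_comm, max_comm]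
  exact abs_sub_mul_le_max_mul he

lemma abs_mul_div_sinh_le {l x S n M : ℝ} (hl : 0 ≤ l) (hx : 2 ≤ x)
    (hn : |n| ≤ S * (1 + exp (-x))) (hM : l * S * exp (-x) ≤ M) :
    |l * n / sinh x| ≤ 2 * ((1 + exp (-2)) / (1 - exp (-4))) * M := by
  have hsinh : 0 < sinh x := sinh_pos_iff.2 (by linarith)
  have hS : 0 ≤ S := nonneg_of_mul_nonneg_left ((abs_nonneg n).trans hn) (by positivity)
  have hC : 0 ≤ (1 + exp (-2)) / (1 - exp (-4)) := by
    have : exp (-4) < 1 := exp_lt_one_iff.2 (by norm_num)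
    exact div_nonneg (by positivity) (by linarith)
  rw [abs_div, abs_mul, abs_of_nonneg hl, abs_of_pos hsinh]
  calc l * |n| / sinh x ≤ l * S * ((1 + exp (-x)) / sinh x) := by
        rw [mul_assoc, mul_div_assoc, ← mul_div_assoc S]
        gcongr
    _ ≤ l * S * (2 * ((1 + exp (-2)) / (1 - exp (-4))) * exp (-x)) := by
        gcongr
        exact one_add_exp_neg_div_sinh_le hx
    _ = 2 * ((1 + exp (-2)) / (1 - exp (-4))) * (l * S * exp (-x)) := by ring
    _ ≤ 2 * ((1 + exp (-2)) / (1 - exp (-4))) * M := by gcongr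

/-- **Boundary derivative mismatch for the linear system.** For `d ≥ 2/λ₂` and `α, β ∈ ℝ²`,
the differences of the boundary derivatives of the linear connecting solution `q_{d,L}` and
of the decaying linear solutions `q⁺_{h,L}`, `q⁻_{h,L}` are given by the explicit formulas,
and `Δ_L^d(β, α) ≤ 2√2 ((1+e⁻²)/(1-e⁻⁴)) max_j (λ_j S_j e^{-λ_j d})`, `S_j = max (|α_j|, |β_j|)`. -/
theorem linear_boundary_derivative_mismatch
    (l1 l2 : ℝ) (hS1 : l2 < l1 ∧ 0 < l2)
    (d : ℝ) (hd : 2 / l2 ≤ d) (α β : E2) :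
    (deriv (qdLin l1 l2 d β α) 0 0 - deriv (qpLin l1 l2 β) 0 0 =
        l1 * (α 0 - β 0 * Real.exp (-(l1 * d))) / Real.sinh (l1 * d)) ∧
    (deriv (qdLin l1 l2 d β α) 0 1 - deriv (qpLin l1 l2 β) 0 1 =
        l2 * (α 1 - β 1 * Real.exp (-(l2 * d))) / Real.sinh (l2 * d)) ∧
    (deriv (qdLin l1 l2 d β α) d 0 - deriv (qmLin l1 l2 d α) d 0 =
        l1 * (-β 0 + α 0 * Real.exp (-(l1 * d))) / Real.sinh (l1 * d)) ∧
    (deriv (qdLin l1 l2 d β α) d 1 - deriv (qmLin l1 l2 d α) d 1 =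
        l2 * (-β 1 + α 1 * Real.exp (-(l2 * d))) / Real.sinh (l2 * d)) ∧
    max ‖deriv (qdLin l1 l2 d β α) 0 - deriv (qpLin l1 l2 β) 0‖
        ‖deriv (qdLin l1 l2 d β α) d - deriv (qmLin l1 l2 d α) d‖ ≤
      2 * Real.sqrt 2 * ((1 + Real.exp (-2)) / (1 - Real.exp (-4))) *
        max (l1 * max |α 0| |β 0| * Real.exp (-(l1 * d)))
            (l2 * max |α 1| |β 1| * Real.exp (-(l2 * d))) := by
  obtain ⟨hl21, hl2⟩ := hS1
  have hx2 : 2 ≤ l2 * d := by rwa [div_le_iff₀ hl2, mul_comm] at hd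
  have hx1 : 2 ≤ l1 * d := hx2.trans (by nlinarith)
  have hne1 : l1 * d ≠ 0 := (by linarith : 0 < l1 * d).ne'
  have hne2 : l2 * d ≠ 0 := (by linarith : 0 < l2 * d).ne'
  have h0 := deriv_qdLin_sub_deriv_qpLin_zero hne1 hne2 β α
  have hdd := deriv_qdLin_sub_deriv_qmLin_self hne1 hne2 β α
  refine ⟨by simpa using congrArg (· 0) h0, by simpa using congrArg (· 1) h0,
    by simpa using congrArg (· 0) hdd, by simpa using congrArg (· 1) hdd, ?_⟩
  rw [h0, hdd, show ∀ c m : ℝ, 2 * √2 * c * m = √2 * (2 * c * m) by intros; ring]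
  refine max_le (norm_pt_le ?_ ?_) (norm_pt_le ?_ ?_)
  · exact abs_mul_div_sinh_le (by linarith) hx1 (abs_sub_mul_le_max_mul (exp_nonneg _))
      (le_max_left _ _)
  · exact abs_mul_div_sinh_le hl2.le hx2 (abs_sub_mul_le_max_mul (exp_nonneg _))
      (le_max_right _ _)
  · exact abs_mul_div_sinh_le (by linarith) hx1 (abs_neg_add_mul_le_max_mul (exp_nonneg _))
      (le_max_left _ _)
  · exact abs_mul_div_sinh_le hl2.le hx2 (abs_neg_add_mul_le_max_mul (exp_nonneg _))
      (le_max_right _ _)
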